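/- A ribbon combinatory algebra is symmetric whenever its positive twist is trivial: in a traced balanced extensional BC±I-algebra, if θ⁺ = I then C⁺ = C⁻ and θ⁻ = I. -/
import Mathlib


namespace Paper

/-- An applicative structure with distinguished elements `B`, `C⁺`, `C⁻`, `I`. -/
structure BCStruct (α : Type*) where
  ap : α → α → α
  B : α
  Cp : α
  Cm : α
  I : α

namespace BCStruct

variable {α : Type*}

/-- `a ∘ b := B a b`. -/
def comp (S : BCStruct α) (a b : α) : α := S.ap (S.ap S.B a) b

/-- Powers: `a⁰ = I`, `a^(n+1) = a ∘ aⁿ`. -/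
def pow (S : BCStruct α) (a : α) : ℕ → α
  | 0 => S.I
  | n + 1 => S.comp a (S.pow a n)

/-- `a• := C⁺ I a`. -/
def bul (S : BCStruct α) (a : α) : α := S.ap (S.ap S.Cp S.I) a

/-- `a` has arity `m → n` iff `(C⁺ B a) ∘ Bᵐ = (B a) ∘ Bⁿ`. -/
def hasArity (S : BCStruct α) (a : α) (m n : ℕ) : Prop :=
  S.comp (S.ap (S.ap S.Cp S.B) a) (S.pow S.B m) = S.comp (S.ap S.B a) (S.pow S.B n)

/-- The axioms of an extensional BC±I-algebra. -/
structure IsExt (S : BCStruct α) : Prop where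
  hB : ∀ a b c, S.ap (S.ap (S.ap S.B a) b) c = S.ap a (S.ap b c)
  hCp : ∀ a b c, S.ap (S.ap (S.ap S.Cp a) b) c = S.ap (S.ap a c) b
  hCm : ∀ a b c, S.ap (S.ap (S.ap S.Cm a) b) c = S.ap (S.ap a c) b
  hI : ∀ a, S.ap S.I a = a
  hC2 : ∀ a b, S.ap (S.ap S.Cp a) b = S.ap (S.ap S.Cm a) b
  hLam : S.ap S.B S.I = S.I
  hRho : S.ap (S.ap S.Cp S.B) S.I = S.ap S.B S.I
  hAlpha : S.comp (S.ap (S.ap S.Cp S.B) S.B) (S.comp S.B S.B) = S.comp (S.ap S.B S.B) S.B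
  hCox1p : S.comp S.Cp S.Cm = S.ap S.B (S.ap S.B S.I)
  hCox1m : S.comp S.Cm S.Cp = S.ap S.B (S.ap S.B S.I)
  hCox2p : S.comp (S.ap (S.ap S.Cp S.B) S.Cp) (S.comp S.B S.B)
      = S.comp (S.ap S.B S.Cp) (S.comp S.B S.B)
  hCox2m : S.comp (S.ap (S.ap S.Cp S.B) S.Cm) (S.comp S.B S.B)
      = S.comp (S.ap S.B S.Cm) (S.comp S.B S.B)
  hCox3p : S.comp (S.ap S.B S.Cp) (S.comp S.Cp (S.ap S.B S.Cp))
      = S.comp S.Cp (S.comp (S.ap S.B S.Cp) S.Cp)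
  hCox3m : S.comp (S.ap S.B S.Cm) (S.comp S.Cm (S.ap S.B S.Cm))
      = S.comp S.Cm (S.comp (S.ap S.B S.Cm) S.Cm)
  hBCp : S.comp (S.ap S.B S.B) S.Cp = S.comp S.Cp (S.comp (S.ap S.B S.Cp) S.B)
  hBCm : S.comp (S.ap S.B S.B) S.Cm = S.comp S.Cm (S.comp (S.ap S.B S.Cm) S.B)

/-- The axioms for twists `θ⁺ = tp`, `θ⁻ = tm` making the algebra balanced. -/
structure IsBalanced (S : BCStruct α) (tp tm : α) : Prop where
  arP : S.comp (S.ap S.B tp) S.B = S.comp (S.ap (S.ap S.Cp S.B) tp) S.B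
  arM : S.comp (S.ap S.B tm) S.B = S.comp (S.ap (S.ap S.Cp S.B) tm) S.B
  invPM : S.comp tp tm = S.ap S.B S.I
  invMP : S.comp tm tp = S.ap S.B S.I
  natBulP : ∀ a, S.ap (S.ap S.Cp tp) a = S.ap (S.ap S.Cp S.I) a
  natBulM : ∀ a, S.ap (S.ap S.Cp tm) a = S.ap (S.ap S.Cp S.I) a
  natBP : S.comp S.B tp = S.comp tp (S.comp S.Cp (S.comp tp (S.comp S.Cp S.B)))
  natBM : S.comp S.B tm = S.comp tm (S.comp S.Cm (S.comp tm (S.comp S.Cm S.B)))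

/-- The axioms for a trace combinator `Tr` (Left/Right Tightening, Yanking, Exchange). -/
structure IsTrace (S : BCStruct α) (tp tm Tr : α) : Prop where
  leftT : S.comp (S.ap (S.ap S.Cp S.B) Tr) S.B = S.comp (S.ap S.B Tr) (S.pow S.B 2)
  rightT : S.comp (S.ap S.B Tr) (S.comp (S.ap (S.ap S.Cp S.B) S.B) S.B) = S.comp S.B Tr
  yankP : S.ap Tr S.Cp = tp
  yankM : S.ap Tr S.Cm = tm
  exch : S.comp (S.comp (S.comp Tr Tr) (S.ap (S.ap S.Cp S.B) S.Cm)) (S.ap S.B S.Cp)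
      = S.comp Tr Tr

/-- A duality: `α• ∘ B = (B α) ∘ B²`, `β• ∘ B³ = B β`, `α ∘ (B β) = B I`,
`(B α) ∘ β = B I`. -/
structure IsDuality (S : BCStruct α) (al be : α) : Prop where
  arAl : S.comp (S.bul al) S.B = S.comp (S.ap S.B al) (S.pow S.B 2)
  arBe : S.comp (S.bul be) (S.pow S.B 3) = S.ap S.B be
  d1 : S.comp al (S.ap S.B be) = S.ap S.B S.I
  d2 : S.comp (S.ap S.B al) be = S.ap S.B S.I

/-- A ribbon structure: a duality compatible with the twists. -/
structure IsRibbon (S : BCStruct α) (tp tm al be : α) : Prop where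
  dual : IsDuality S al be
  dTp : S.comp al tp = S.comp al (S.ap S.B tp)
  dTm : S.comp al tm = S.comp al (S.ap S.B tm)

end BCStruct

end Paper

/-- A ribbon combinatory algebra is symmetric whenever its positive twist is
trivial: if `θ⁺ = I` then `C⁺ = C⁻` and `θ⁻ = I`. -/
theorem stmt_18 {α : Type*} (S : Paper.BCStruct α) (hS : S.IsExt)
    {tp tm Tr : α} (hBal : S.IsBalanced tp tm) (hTr : S.IsTrace tp tm Tr)
    (h : tp = S.I) :
    S.Cp = S.Cm ∧ tm = S.I := by
  -- θ⁻ = I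
  have htm : tm = S.I := by
    have e := hBal.invPM
    rw [h] at e
    simp only [Paper.BCStruct.comp] at e
    rw [hS.hLam, hS.hI] at e
    exact e
  -- left unit for composition
  have lunit : ∀ x, S.comp S.I x = x := by
    intro x
    show S.ap (S.ap S.B S.I) x = x
    rw [hS.hLam, hS.hI]
  -- right unit (pointwise form): (B x) I = x
  have runitA : ∀ x, S.ap (S.ap S.B x) S.I = x := by
    intro x
    have h1 : S.ap (S.ap (S.ap S.Cp S.B) S.I) x = S.ap (S.ap S.B x) S.I :=
      hS.hCp S.B S.I x
    rw [hS.hRho, hS.hLam, hS.hI] at h1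
    exact h1.symm
  have runit : ∀ x, S.comp x S.I = x := by
    intro x; exact runitA x
  -- inverses pointwise: Cp (Cm x) = x and Cm (Cp x) = x
  have c1p : S.comp S.Cp S.Cm = S.I := by
    rw [hS.hCox1p]; simp only [hS.hLam]
  have c1m : S.comp S.Cm S.Cp = S.I := by
    rw [hS.hCox1m]; simp only [hS.hLam]
  have L5p : ∀ x, S.ap S.Cp (S.ap S.Cm x) = x := by
    intro x
    have h2 : S.ap (S.comp S.Cp S.Cm) x = S.ap S.I x := by rw [c1p]
    simp only [Paper.BCStruct.comp] at h2
    rw [hS.hB, hS.hI] at h2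
    exact h2
  have L5m : ∀ x, S.ap S.Cm (S.ap S.Cp x) = x := by
    intro x
    have h2 : S.ap (S.comp S.Cm S.Cp) x = S.ap S.I x := by rw [c1m]
    simp only [Paper.BCStruct.comp] at h2
    rw [hS.hB, hS.hI] at h2
    exact h2
  -- from naturality of θ⁺ (with tp = I): Cp (Cp I) = I
  have e0 := hBal.natBP
  rw [h] at e0
  simp only [lunit, runit] at e0
  -- e0 : S.B = S.comp S.Cp (S.comp S.Cp S.B)
  have e2I : S.ap S.Cp (S.ap S.Cp S.I) = S.I := by
    have e1 : S.ap S.B S.I = S.ap (S.comp S.Cp (S.comp S.Cp S.B)) S.I := by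
      rw [← e0]
    simp only [Paper.BCStruct.comp] at e1
    simp only [hS.hB] at e1
    rw [hS.hLam] at e1
    exact e1.symm
  -- Cm I = Cp I
  have hb : S.ap S.Cm S.I = S.ap S.Cp S.I := by
    conv_lhs => rw [← e2I]
    exact L5m (S.ap S.Cp S.I)
  -- hBCp at I : (B B) (Cp I) = Cp Cp, and the minus version
  have hc0 : S.ap (S.ap S.B S.B) (S.ap S.Cp S.I) = S.ap S.Cp S.Cp := by
    have t : S.ap (S.comp (S.ap S.B S.B) S.Cp) S.I
        = S.ap (S.comp S.Cp (S.comp (S.ap S.B S.Cp) S.B)) S.I := by rw [hS.hBCp]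
    simp only [Paper.BCStruct.comp] at t
    simp only [hS.hB] at t
    rw [hS.hLam, runitA] at t
    exact t
  have hd0 : S.ap (S.ap S.B S.B) (S.ap S.Cm S.I) = S.ap S.Cm S.Cm := by
    have t : S.ap (S.comp (S.ap S.B S.B) S.Cm) S.I
        = S.ap (S.comp S.Cm (S.comp (S.ap S.B S.Cm) S.B)) S.I := by rw [hS.hBCm]
    simp only [Paper.BCStruct.comp] at t
    simp only [hS.hB] at t
    rw [hS.hLam, runitA] at t
    exact t
  -- the squares agree
  have h8 : S.ap S.Cp S.Cp = S.ap S.Cm S.Cm := by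
    rw [← hc0, ← hd0, hb]
  -- Cm = Cp (Cp Cp)
  have h9 : S.Cm = S.ap S.Cp (S.ap S.Cp S.Cp) := by
    have t := (L5p S.Cm).symm
    rw [← h8] at t
    exact t
  have h10 : ∀ y, S.ap (S.ap S.Cp (S.ap S.Cp S.Cp)) y = S.ap S.Cp y := by
    intro y
    rw [hS.hC2, L5m S.Cp]
  have h11 : ∀ y, S.ap S.Cm y = S.ap S.Cp y := by
    intro y
    rw [h9]; exact h10 y
  have h12 : ∀ x, S.ap S.Cp (S.ap S.Cp x) = x := by
    intro x
    rw [← h11 (S.ap S.Cp x)]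
    exact L5m x
  exact ⟨(h9.trans (h12 S.Cp)).symm, htm⟩
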